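/- arXiv:1301.5573 — 2 statements merged into one kernel-verified Lean document; each statement's English description precedes it below -/
import Mathlib

section
/- Let R be an associative ring with unity and let M be a Ding projective left R-module. Then Ext^i_R(M, L) = 0 for every integer i > 0 and every left R-module L of finite flat dimension. -/
universe u

open scoped TensorProduct DirectSum

/-- The subgroup of `E ⊗[ℤ] F` by which one quotients to obtain the balanced tensor
product `E ⊗_R F` of a right `R`-module `E` and a left `R`-module `F`. -/
def balancedSub (R : Type u) [Ring R] (E F : Type u) [AddCommGroup E] [Module Rᵐᵒᵖ E]
    [AddCommGroup F] [Module R F] : Submodule ℤ (TensorProduct ℤ E F) :=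
  Submodule.span ℤ
    {x | ∃ (r : R) (e : E) (f : F),
      x = (MulOpposite.op r • e) ⊗ₜ[ℤ] f - e ⊗ₜ[ℤ] (r • f)}

/-- The tensor product `E ⊗_R F` of a right `R`-module `E` and a left `R`-module `F`
over a possibly noncommutative ring `R`, realized as a quotient of `E ⊗[ℤ] F`. -/
def ModTensor (R : Type u) [Ring R] (E F : Type u) [AddCommGroup E] [Module Rᵐᵒᵖ E]
    [AddCommGroup F] [Module R F] : Type u :=
  TensorProduct ℤ E F ⧸ balancedSub R E F

noncomputable instance (R : Type u) [Ring R] (E F : Type u) [AddCommGroup E] [Module Rᵐᵒᵖ E]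
    [AddCommGroup F] [Module R F] : AddCommGroup (ModTensor R E F) :=
  inferInstanceAs (AddCommGroup (TensorProduct ℤ E F ⧸ balancedSub R E F))

/-- The map `E ⊗_R F → E' ⊗_R F` induced by a map `g : E → E'` of right `R`-modules. -/
noncomputable def ModTensor.mapLeft (R : Type u) [Ring R] {E E' : Type u} [AddCommGroup E]
    [Module Rᵐᵒᵖ E] [AddCommGroup E'] [Module Rᵐᵒᵖ E'] (F : Type u) [AddCommGroup F]
    [Module R F] (g : E →ₗ[Rᵐᵒᵖ] E') : ModTensor R E F →ₗ[ℤ] ModTensor R E' F :=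
  Submodule.mapQ (balancedSub R E F) (balancedSub R E' F)
    (TensorProduct.map (g.restrictScalars ℤ) LinearMap.id)
    (by
      rw [balancedSub, Submodule.span_le]
      rintro x ⟨r, e, f, rfl⟩
      refine Submodule.subset_span ⟨r, g e, f, ?_⟩
      erw [map_sub, TensorProduct.map_tmul, TensorProduct.map_tmul]; simp)

/-- The map `E ⊗_R F → E ⊗_R F'` induced by a map `f : F → F'` of left `R`-modules. -/
noncomputable def ModTensor.mapRight (R : Type u) [Ring R] (E : Type u) [AddCommGroup E]
    [Module Rᵐᵒᵖ E] {F F' : Type u} [AddCommGroup F] [Module R F] [AddCommGroup F']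
    [Module R F'] (f : F →ₗ[R] F') : ModTensor R E F →ₗ[ℤ] ModTensor R E F' :=
  Submodule.mapQ (balancedSub R E F) (balancedSub R E F')
    (TensorProduct.map LinearMap.id (f.restrictScalars ℤ))
    (by
      rw [balancedSub, Submodule.span_le]
      rintro x ⟨r, e, y, rfl⟩
      refine Submodule.subset_span ⟨r, e, f y, ?_⟩
      erw [map_sub, TensorProduct.map_tmul, TensorProduct.map_tmul]; simp)

/-- A left module `F` over a (possibly noncommutative) ring `R` is flat if tensoring
with `F` preserves injectivity of maps of right `R`-modules. -/
def IsFlatModule (R : Type u) [Ring R] (F : Type u) [AddCommGroup F] [Module R F] : Prop :=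
  ∀ (E E' : Type u) [AddCommGroup E] [Module Rᵐᵒᵖ E] [AddCommGroup E'] [Module Rᵐᵒᵖ E']
    (g : E →ₗ[Rᵐᵒᵖ] E'), Function.Injective g →
      Function.Injective (ModTensor.mapLeft R F g)

/-- `Ext^i_R(M, L) = 0`, expressed using the `Ext` functor on the category of left
`R`-modules (with its `ℤ`-linear structure). -/
def ExtIsZero (R : Type u) [Ring R] (i : ℕ) (M L : Type u) [AddCommGroup M] [Module R M]
    [AddCommGroup L] [Module R L] : Prop :=
  Subsingleton ((((_root_.Ext ℤ (ModuleCat.{u} R) i).obj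
    (Opposite.op (ModuleCat.of R M))).obj (ModuleCat.of R L)) : Type u)

/-- `FlatDimLE R n L` means the left `R`-module `L` admits a flat resolution of
length at most `n`. -/
def FlatDimLE (R : Type u) [Ring R] : ℕ → ModuleCat.{u} R → Prop
  | 0, L => IsFlatModule R L
  | n + 1, L =>
    ∃ (F K : ModuleCat.{u} R) (ι : (K : Type u) →ₗ[R] F) (π : (F : Type u) →ₗ[R] L),
      IsFlatModule R F ∧ Function.Injective ι ∧ Function.Surjective π ∧
      Function.Exact ι π ∧ FlatDimLE R n K

/-- A left `R`-module `L` has finite flat dimension if it admits a finite resolution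
by flat modules. -/
def HasFiniteFlatDimension (R : Type u) [Ring R] (L : Type u) [AddCommGroup L]
    [Module R L] : Prop :=
  ∃ n : ℕ, FlatDimLE R n (ModuleCat.of R L)

/-- A left `R`-module `M` is Ding projective if there is an exact sequence
`⋯ → P₁ → P₀ → P₋₁ → P₋₂ → ⋯` of projective modules with `M ≅ ker (P₀ → P₋₁)`
which stays exact under `Hom_R(-, F)` for every flat module `F`. -/
def IsDingProjective (R : Type u) [Ring R] (M : Type u) [AddCommGroup M] [Module R M] : Prop :=
  ∃ (P : ℤ → ModuleCat.{u} R) (d : ∀ n : ℤ, (P (n + 1) : Type u) →ₗ[R] P n),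
    (∀ n, Module.Projective R (P n)) ∧
    (∀ n, Function.Exact (d (n + 1)) (d n)) ∧
    (∀ (F : Type u) [AddCommGroup F] [Module R F], IsFlatModule R F →
      ∀ n : ℤ, Function.Exact
        (fun g : (P n : Type u) →ₗ[R] F => g ∘ₗ d n)
        (fun g : (P (n + 1) : Type u) →ₗ[R] F => g ∘ₗ d (n + 1))) ∧
    Nonempty (M ≃ₗ[R] LinearMap.ker (d (-1)))

/-- A left `R`-module `M` is two-degree Ding projective if there is an exact sequence
`⋯ → D₁ → D₀ → D₋₁ → D₋₂ → ⋯` of Ding projective modules with `M ≅ ker (D₀ → D₋₁)`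
which stays exact under `Hom_R(-, F)` for every flat module `F`. -/
def IsTwoDegreeDingProjective (R : Type u) [Ring R] (M : Type u) [AddCommGroup M]
    [Module R M] : Prop :=
  ∃ (D : ℤ → ModuleCat.{u} R) (d : ∀ n : ℤ, (D (n + 1) : Type u) →ₗ[R] D n),
    (∀ n, IsDingProjective R (D n)) ∧
    (∀ n, Function.Exact (d (n + 1)) (d n)) ∧
    (∀ (F : Type u) [AddCommGroup F] [Module R F], IsFlatModule R F →
      ∀ n : ℤ, Function.Exact
        (fun g : (D n : Type u) →ₗ[R] F => g ∘ₗ d n)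
        (fun g : (D (n + 1) : Type u) →ₗ[R] F => g ∘ₗ d (n + 1))) ∧
    Nonempty (M ≃ₗ[R] LinearMap.ker (d (-1)))

/-- A left `R`-module `M` is strongly two-degree Ding projective if there is an exact
sequence `⋯ →f D →f D →f D →f ⋯` with `D` Ding projective and a single map `f`, with
`M ≅ ker f`, which stays exact under `Hom_R(-, F)` for every flat module `F`. -/
def IsStronglyTwoDegreeDingProjective (R : Type u) [Ring R] (M : Type u) [AddCommGroup M]
    [Module R M] : Prop :=
  ∃ (D : ModuleCat.{u} R) (f : (D : Type u) →ₗ[R] D),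
    IsDingProjective R D ∧
    Function.Exact f f ∧
    (∀ (F : Type u) [AddCommGroup F] [Module R F], IsFlatModule R F →
      Function.Exact
        (fun g : (D : Type u) →ₗ[R] F => g ∘ₗ f)
        (fun g : (D : Type u) →ₗ[R] F => g ∘ₗ f)) ∧
    Nonempty (M ≃ₗ[R] LinearMap.ker f)

/-- A left `R`-module `M` is Gorenstein projective if there is an exact sequence
`⋯ → P₁ → P₀ → P₋₁ → P₋₂ → ⋯` of projective modules with `M ≅ ker (P₀ → P₋₁)`
which stays exact under `Hom_R(-, Q)` for every projective module `Q`. -/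
def IsGorensteinProjective (R : Type u) [Ring R] (M : Type u) [AddCommGroup M]
    [Module R M] : Prop :=
  ∃ (P : ℤ → ModuleCat.{u} R) (d : ∀ n : ℤ, (P (n + 1) : Type u) →ₗ[R] P n),
    (∀ n, Module.Projective R (P n)) ∧
    (∀ n, Function.Exact (d (n + 1)) (d n)) ∧
    (∀ (Q : Type u) [AddCommGroup Q] [Module R Q], Module.Projective R Q →
      ∀ n : ℤ, Function.Exact
        (fun g : (P n : Type u) →ₗ[R] Q => g ∘ₗ d n)
        (fun g : (P (n + 1) : Type u) →ₗ[R] Q => g ∘ₗ d (n + 1))) ∧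
    Nonempty (M ≃ₗ[R] LinearMap.ker (d (-1)))

/-- A left `R`-module `H` is Gorenstein flat if there is an exact sequence
`⋯ → F₁ → F₀ → F₋₁ → F₋₂ → ⋯` of flat modules with `H ≅ ker (F₀ → F₋₁)` which stays
exact under `E ⊗_R -` for every injective right `R`-module `E`. -/
def IsGorensteinFlat (R : Type u) [Ring R] (H : Type u) [AddCommGroup H] [Module R H] : Prop :=
  ∃ (F : ℤ → ModuleCat.{u} R) (d : ∀ n : ℤ, (F (n + 1) : Type u) →ₗ[R] F n),
    (∀ n, IsFlatModule R (F n)) ∧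
    (∀ n, Function.Exact (d (n + 1)) (d n)) ∧
    (∀ (E : Type u) [AddCommGroup E] [Module Rᵐᵒᵖ E], Module.Injective Rᵐᵒᵖ E →
      ∀ n : ℤ, Function.Exact
        (ModTensor.mapRight R E (d (n + 1)))
        (ModTensor.mapRight R E (d n))) ∧
    Nonempty (H ≃ₗ[R] LinearMap.ker (d (-1)))

/-- A left `R`-module `E` is FP-injective if `Ext¹_R(F, E) = 0` for every finitely
presented module `F`. -/
def IsFPInjective (R : Type u) [Ring R] (E : Type u) [AddCommGroup E] [Module R E] : Prop :=
  ∀ (F : Type u) [AddCommGroup F] [Module R F], Module.FinitePresentation R F →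
    ExtIsZero R 1 F E

/-- A left `R`-module `M` is Ding injective if there is an exact sequence
`⋯ → E₁ → E₀ → E₋₁ → E₋₂ → ⋯` of injective modules with `M ≅ ker (E₀ → E₋₁)`
which stays exact under `Hom_R(H, -)` for every FP-injective module `H`. -/
def IsDingInjective (R : Type u) [Ring R] (M : Type u) [AddCommGroup M] [Module R M] : Prop :=
  ∃ (E : ℤ → ModuleCat.{u} R) (d : ∀ n : ℤ, (E (n + 1) : Type u) →ₗ[R] E n),
    (∀ n, Module.Injective R (E n)) ∧
    (∀ n, Function.Exact (d (n + 1)) (d n)) ∧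
    (∀ (H : Type u) [AddCommGroup H] [Module R H], IsFPInjective R H →
      ∀ n : ℤ, Function.Exact
        (fun g : H →ₗ[R] (E (n + 1 + 1) : Type u) => d (n + 1) ∘ₗ g)
        (fun g : H →ₗ[R] (E (n + 1) : Type u) => d n ∘ₗ g)) ∧
    Nonempty (M ≃ₗ[R] LinearMap.ker (d (-1)))

/-- A left `R`-module `M` is two-degree Ding injective if there is an exact sequence
`⋯ → D₁ → D₀ → D₋₁ → D₋₂ → ⋯` of Ding injective modules with `M ≅ ker (D₀ → D₋₁)`
which stays exact under `Hom_R(H, -)` for every FP-injective module `H`. -/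
def IsTwoDegreeDingInjective (R : Type u) [Ring R] (M : Type u) [AddCommGroup M]
    [Module R M] : Prop :=
  ∃ (D : ℤ → ModuleCat.{u} R) (d : ∀ n : ℤ, (D (n + 1) : Type u) →ₗ[R] D n),
    (∀ n, IsDingInjective R (D n)) ∧
    (∀ n, Function.Exact (d (n + 1)) (d n)) ∧
    (∀ (H : Type u) [AddCommGroup H] [Module R H], IsFPInjective R H →
      ∀ n : ℤ, Function.Exact
        (fun g : H →ₗ[R] (D (n + 1 + 1) : Type u) => d (n + 1) ∘ₗ g)
        (fun g : H →ₗ[R] (D (n + 1) : Type u) => d n ∘ₗ g)) ∧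
    Nonempty (M ≃ₗ[R] LinearMap.ker (d (-1)))

/-!
Truncating the complete resolution `⋯ → P 1 → P 0 → P (-1) → ⋯` of `M` gives an ordinary
projective resolution `P 1 ← P 2 ← ⋯` of `M ≅ ker (d (-1)) = im (d 0)`, so `Ext^i(M, L)` is the
`i`-th cohomology of `Hom(P_{≥ 1}, L)`. For flat `L` this vanishes in positive degrees because
`Hom(P, L)` is exact. In general, a step `0 → K → F → L → 0` of a flat resolution of `L` gives,
the `P n` being projective, a short exact sequence of Hom complexes, whose long exact sequence
places `Ext^i(M, L)` between `Ext^i(M, F) = 0` and `Ext^(i+1)(M, K) = 0`; one inducts on the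
length of the flat resolution.
-/

universe v w

open CategoryTheory Limits

section LinearYoneda

variable {C : Type u} [Category.{v} C] [Abelian C] {A : Type w} [Ring A] [Linear A C]

lemma CategoryTheory.ShortComplex.ShortExact.map_linearCoyoneda_of_projective
    {S : ShortComplex C} (hS : S.ShortExact) (P : C) [Projective P] :
    (S.map ((linearCoyoneda A C).obj (Opposite.op P))).ShortExact := by
  have := hS.mono_f
  have := hS.epi_g
  refine ModuleCat.shortComplex_shortExact _ (fun g => ⟨fun hg => ?_, ?_⟩) ?_ ?_
  · exact ⟨hS.exact.lift g hg, hS.exact.lift_f g hg⟩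
  · rintro ⟨h : P ⟶ S.X₁, rfl⟩
    change (h ≫ S.f) ≫ S.g = 0
    simp
  · exact fun g h hgh => (cancel_mono S.f).mp hgh
  · exact fun g => ⟨Projective.factorThru g S.g, Projective.factorThru_comp g S.g⟩

variable (A) in
noncomputable def ChainComplex.linearYonedaFunctor {α : Type*} [AddRightCancelSemigroup α]
    [One α] (X : ChainComplex C α) : C ⥤ CochainComplex (ModuleCat.{v} A) α where
  obj Y := X.linearYonedaObj A Y
  map f :=
    { f := fun k => ((linearCoyoneda A C).obj (Opposite.op (X.X k))).map f
      comm' := fun i j _ => by ext g; exact (Category.assoc _ _ _).symm }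
  map_id Y := by ext k g; exact Category.comp_id g
  map_comp f g := by ext k h; exact (Category.assoc _ _ _).symm

instance {α : Type*} [AddRightCancelSemigroup α] [One α] (X : ChainComplex C α) :
    (X.linearYonedaFunctor A).Additive where
  map_add := by
    intros
    ext
    exact Preadditive.comp_add _ _ _ _ _ _

lemma ChainComplex.linearYonedaFunctor_map_shortExact (X : ChainComplex C ℕ)
    [∀ k, Projective (X.X k)] {S : ShortComplex C} (hS : S.ShortExact) :
    (S.map (X.linearYonedaFunctor A)).ShortExact :=
  HomologicalComplex.shortExact_of_degreewise_shortExact _ fun k =>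
    hS.map_linearCoyoneda_of_projective (X.X k)

lemma ChainComplex.linearYonedaObj_exactAt_of_shortExact (X : ChainComplex C ℕ)
    [∀ k, Projective (X.X k)] {S : ShortComplex C} (hS : S.ShortExact) (i : ℕ)
    (h₂ : (X.linearYonedaObj A S.X₂).ExactAt i)
    (h₁ : (X.linearYonedaObj A S.X₁).ExactAt (i + 1)) :
    (X.linearYonedaObj A S.X₃).ExactAt i := by
  rw [HomologicalComplex.exactAt_iff_isZero_homology] at *
  exact ((X.linearYonedaFunctor_map_shortExact (A := A) hS).homology_exact₃ i (i + 1)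
    rfl).isZero_X₂ (h₂.eq_of_src _ _) (h₁.eq_of_tgt _ _)

end LinearYoneda

noncomputable def CategoryTheory.ProjectiveResolution.ofExact {C : Type u} [Category.{v} C]
    [Abelian C] {Z : C} (X : ChainComplex C ℕ) [∀ k, Projective (X.X k)]
    (hX : ∀ k, X.ExactAt (k + 1)) (π : X.X 0 ⟶ Z) (w : X.d 1 0 ≫ π = 0)
    (hπ : (ShortComplex.mk _ _ w).Exact) [Epi π] :
    ProjectiveResolution Z where
  complex := X
  π := (ChainComplex.toSingle₀Equiv _ _).symm ⟨π, w⟩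
  quasiIso := ⟨fun k => by
    cases k with
    | zero =>
      rw [ChainComplex.quasiIsoAt₀_iff,
        ShortComplex.quasiIso_iff_of_zeros' _ (X.shape _ _ (by simp)) rfl rfl]
      simp only [HomologicalComplex.shortComplexFunctor'_obj_f,
        HomologicalComplex.shortComplexFunctor'_map_τ₂,
        ChainComplex.toSingle₀Equiv_symm_apply_f_zero]
      exact ⟨hπ, ‹Epi π›⟩
    | succ k =>
      rw [quasiIsoAt_iff_exactAt' _ _ (ChainComplex.exactAt_succ_single_obj _ _)]
      exact hX k⟩

lemma ChainComplex.linearYonedaObj_exactAt_succ_of_flatDimLE {R : Type u} [Ring R]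
    (X : ChainComplex (ModuleCat.{u} R) ℕ) [∀ k, Projective (X.X k)]
    (hX : ∀ F : ModuleCat.{u} R, IsFlatModule R F →
      ∀ i, (X.linearYonedaObj ℤ F).ExactAt (i + 1)) :
    ∀ (n : ℕ) (L : ModuleCat.{u} R), FlatDimLE R n L →
      ∀ i, (X.linearYonedaObj ℤ L).ExactAt (i + 1)
  | 0, L, hL => hX L hL
  | n + 1, _, ⟨F, K, ι, π, hF, hι, hπ, hιπ, hK⟩ => fun i =>
    X.linearYonedaObj_exactAt_of_shortExact
      (ModuleCat.shortComplex_shortExact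
        (ModuleCat.shortComplexOfCompEqZero ι π hιπ.linearMap_comp_eq_zero) hιπ hι hπ)
      (i + 1) (hX F hF i) (linearYonedaObj_exactAt_succ_of_flatDimLE X hX n K hK (i + 1))

section PositiveTruncation

variable {R : Type u} [Ring R] (P : ℤ → ModuleCat.{u} R)
  (d : ∀ n : ℤ, (P (n + 1) : Type u) →ₗ[R] P n) (hd : ∀ n, Function.Exact (d (n + 1)) (d n))

-- `by exact` is needed because `P (↑(k + 1) + 1)` and `P (↑k + 1 + 1)` agree only after
-- unfolding integer addition; the same happens with `P (0 + 1)` and `P (-1 + 1 + 1)` below.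
noncomputable def positiveTruncation : ChainComplex (ModuleCat.{u} R) ℕ :=
  ChainComplex.of (fun k => P (k + 1)) (fun k => ModuleCat.ofHom (by exact d (k + 1)))
    (fun k => ModuleCat.hom_ext (by exact (hd (k + 1)).linearMap_comp_eq_zero))

lemma positiveTruncation_d_succ (k : ℕ) :
    (positiveTruncation P d hd).d (k + 1) k = ModuleCat.ofHom (by exact d (k + 1)) := by
  simp [positiveTruncation]

lemma positiveTruncation_exactAt_succ (k : ℕ) :
    (positiveTruncation P d hd).ExactAt (k + 1) := by
  rw [HomologicalComplex.exactAt_iff' _ (k + 1 + 1) (k + 1) k (by simp) (by simp),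
    ShortComplex.ShortExact.moduleCat_exact_iff_function_exact]
  simp only [HomologicalComplex.sc', HomologicalComplex.shortComplexFunctor'_obj_f,
    HomologicalComplex.shortComplexFunctor'_obj_g, positiveTruncation_d_succ]
  exact hd (k + 1)

lemma positiveTruncation_linearYonedaObj_exactAt_succ (Y : ModuleCat.{u} R)
    (hY : ∀ n : ℤ, Function.Exact (fun g : (P n : Type u) →ₗ[R] Y => g ∘ₗ d n)
      (fun g : (P (n + 1) : Type u) →ₗ[R] Y => g ∘ₗ d (n + 1))) (j : ℕ) :
    ((positiveTruncation P d hd).linearYonedaObj ℤ Y).ExactAt (j + 1) := by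
  rw [HomologicalComplex.exactAt_iff' _ j (j + 1) (j + 1 + 1) (by simp) (by simp),
    ShortComplex.ShortExact.moduleCat_exact_iff_function_exact]
  intro g
  simp only [HomologicalComplex.sc', HomologicalComplex.shortComplexFunctor'_obj_f,
    HomologicalComplex.shortComplexFunctor'_obj_g, ChainComplex.linearYonedaObj_d,
    positiveTruncation_d_succ]
  exact ModuleCat.hom_ext_iff.trans <| (hY _ g.hom).trans
    ⟨fun ⟨h, hh⟩ => ⟨ModuleCat.ofHom h, ModuleCat.hom_ext hh⟩,
      fun ⟨h, hh⟩ => ⟨h.hom, congrArg ModuleCat.Hom.hom hh⟩⟩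

variable {M : Type u} [AddCommGroup M] [Module R M] (e : M ≃ₗ[R] LinearMap.ker (d (-1)))

noncomputable def kerAugmentation : (P (0 + 1) : Type u) →ₗ[R] M :=
  e.symm ∘ₗ LinearMap.codRestrict (LinearMap.ker (d (-1))) (by exact d 0)
    fun x => LinearMap.mem_ker.mpr <|
      (hd (-1)).apply_apply_eq_zero (show (P (-1 + 1 + 1) : Type u) from x)

lemma exact_kerAugmentation : Function.Exact (d (0 + 1)) (kerAugmentation P d hd e) := by
  rw [kerAugmentation, LinearEquiv.postcomp_exact_iff_exact,
    ← (LinearMap.ker (d (-1))).injective_subtype.comp_exact_iff_exact]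
  exact hd 0

lemma surjective_kerAugmentation : Function.Surjective (kerAugmentation P d hd e) := by
  refine e.symm.surjective.comp fun ⟨y, hy⟩ => ?_
  obtain ⟨x, rfl⟩ := (hd (-1) y).mp hy
  exact ⟨x, rfl⟩

noncomputable def positiveTruncationResolution (hP : ∀ n, Module.Projective R (P n)) :
    ProjectiveResolution (ModuleCat.of R M) :=
  have (k : ℕ) : Projective ((positiveTruncation P d hd).X k) :=
    have := hP (k + 1)
    (P (k + 1)).projective_of_categoryTheory_projective
  let π : (positiveTruncation P d hd).X 0 ⟶ ModuleCat.of R M :=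
    ModuleCat.ofHom (kerAugmentation P d hd e)
  have : Epi π := (ModuleCat.epi_iff_surjective _).mpr (surjective_kerAugmentation P d hd e)
  have hπ : Function.Exact ((positiveTruncation P d hd).d 1 0) π := by
    rw [positiveTruncation_d_succ]
    exact exact_kerAugmentation P d hd e
  .ofExact _ (positiveTruncation_exactAt_succ P d hd) π
    (ModuleCat.hom_ext hπ.linearMap_comp_eq_zero)
    ((ShortComplex.ShortExact.moduleCat_exact_iff_function_exact _).mpr hπ)

end PositiveTruncation

/-- If `M` is a Ding projective left `R`-module, then `Ext^i_R(M, L) = 0`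
for every integer `i > 0` and every left `R`-module `L` of finite flat dimension. -/
theorem ding_projective_ext_vanishing (R : Type u) [Ring R]
    (M : Type u) [AddCommGroup M] [Module R M] (hM : IsDingProjective R M)
    (L : Type u) [AddCommGroup L] [Module R L] (hL : HasFiniteFlatDimension R L)
    (i : ℕ) (hi : 0 < i) :
    ExtIsZero R i M L := by
  obtain ⟨P, d, hP, hd, hflat, ⟨e⟩⟩ := hM
  obtain ⟨n, hn⟩ := hL
  obtain ⟨j, rfl⟩ := Nat.exists_eq_add_one_of_ne_zero hi.ne'
  let Q := positiveTruncationResolution P d hd e hP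
  have := Q.projective
  rw [ExtIsZero, ← ModuleCat.isZero_iff_subsingleton]
  refine IsZero.of_iso ?_ (Q.isoExt _ _)
  rw [← HomologicalComplex.exactAt_iff_isZero_homology]
  exact Q.complex.linearYonedaObj_exactAt_succ_of_flatDimLE
    (fun F hF => positiveTruncation_linearYonedaObj_exactAt_succ P d hd F (hflat F hF)) n _ hn j
end

section
/- Let R be an associative ring with unity and M a left R-module. Then M is strongly two-degree Ding projective if and only if there is a short exact sequence 0 → M → D → M → 0 with D Ding projective such that Ext^1_R(M, F) = 0 for every flat left R-module F. -/
universe u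

open scoped TensorProduct DirectSum

/-!
For a projective presentation `p : P ↠ M`, `Ext¹(M, F) = 0` says exactly that every map
`ker p → F` extends to `P`, and this does not depend on the presentation. If `f : D → D` is
exact with `ker f ≅ M`, then `Hom(-, F)`-exactness of `⋯ → D → D → ⋯` says that maps
`ker f → F` extend to `D`, i.e. that `Hom(D, F) → Hom(M, F)` is onto for
`0 → M → D → M → 0`. As `Ext¹(D, F) = 0` for `D` Ding projective and `F` flat, the long exact
`Ext` sequence makes this equivalent to `Ext¹(M, F) = 0`; the short exact sequence and
`f = ι ∘ π` determine each other.
-/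

section HomExtends

variable {R : Type*} [Ring R] {W X Y Z P Q D M F : Type*} [AddCommGroup W] [Module R W]
  [AddCommGroup X] [Module R X] [AddCommGroup Y] [Module R Y] [AddCommGroup Z] [Module R Z]
  [AddCommGroup P] [Module R P] [AddCommGroup Q] [Module R Q] [AddCommGroup D] [Module R D]
  [AddCommGroup M] [Module R M] [AddCommGroup F] [Module R F]

variable (F) in
def Submodule.HomExtends (N : Submodule R Y) : Prop :=
  ∀ φ : N →ₗ[R] F, ∃ h : Y →ₗ[R] F, h ∘ₗ N.subtype = φ

theorem LinearMap.exists_comp_eq_of_ker_le {q : X →ₗ[R] Y} (hq : Function.Surjective q)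
    {g : X →ₗ[R] F} (h : LinearMap.ker q ≤ LinearMap.ker g) : ∃ ψ : Y →ₗ[R] F, ψ ∘ₗ q = g :=
  ⟨(LinearMap.ker q).liftQ g h ∘ₗ (q.quotKerEquivOfSurjective hq).symm.toLinearMap, by
    ext x
    simp⟩

theorem Function.Exact.exact_comp_self {ι : X →ₗ[R] Y} {π : Y →ₗ[R] X}
    (h : Function.Exact ι π) (hι : Function.Injective ι) (hπ : Function.Surjective π) :
    Function.Exact (ι ∘ₗ π) (ι ∘ₗ π) :=
  hι.comp_exact_iff_exact.2 (hπ.comp_exact_iff_exact.2 h)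

theorem exact_precomp_iff_homExtends_ker {c : W →ₗ[R] X} {a : X →ₗ[R] Y} {b : Y →ₗ[R] Z}
    (hca : Function.Exact c a) (hab : Function.Exact a b) :
    Function.Exact (fun g : Y →ₗ[R] F => g ∘ₗ a) (fun g : X →ₗ[R] F => g ∘ₗ c) ↔
      (LinearMap.ker b).HomExtends F := by
  set a' : X →ₗ[R] LinearMap.ker b := a.codRestrict _ fun x => hab.apply_apply_eq_zero x
  have ha' : Function.Surjective a' := fun k =>
    let ⟨x, hx⟩ := (hab k).1 k.2
    ⟨x, Subtype.ext hx⟩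
  constructor
  · intro hex φ
    obtain ⟨h, hh⟩ := (hex (φ ∘ₗ a')).1 <| by
      ext w
      simp [show a' (c w) = 0 from Subtype.ext (hca.apply_apply_eq_zero w)]
    refine ⟨h, LinearMap.ext fun k => ?_⟩
    obtain ⟨x, rfl⟩ := ha' k
    exact LinearMap.congr_fun hh x
  · intro hext g
    refine ⟨fun hg => ?_, ?_⟩
    · obtain ⟨φ, rfl⟩ := LinearMap.exists_comp_eq_of_ker_le ha' (g := g) fun x hx => by
        obtain ⟨w, rfl⟩ := (hca x).1 (congrArg Subtype.val hx)
        exact LinearMap.congr_fun hg w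
      obtain ⟨h, rfl⟩ := hext φ
      exact ⟨h, rfl⟩
    · rintro ⟨h, rfl⟩
      ext w
      simp [hca.apply_apply_eq_zero w]

theorem Submodule.HomExtends.ker_of_projective [Module.Projective R P] [Module.Projective R Q]
    {p : P →ₗ[R] M} {q : Q →ₗ[R] M} (hp : Function.Surjective p) (hq : Function.Surjective q)
    (h : (LinearMap.ker p).HomExtends F) : (LinearMap.ker q).HomExtends F := by
  intro φ
  obtain ⟨α, hα⟩ := Module.projective_lifting_property p q hp
  obtain ⟨β, hβ⟩ := Module.projective_lifting_property q p hq
  have hβp : ∀ x ∈ LinearMap.ker p, β x ∈ LinearMap.ker q := fun x hx => by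
    simpa [← LinearMap.comp_apply, hβ] using hx
  obtain ⟨e, he⟩ := h (φ ∘ₗ β.restrict hβp)
  -- the correction `y - β (α y)` lies in `ker q` because `q ∘ β ∘ α = q`
  let r : Q →ₗ[R] LinearMap.ker q := (LinearMap.id - β ∘ₗ α).codRestrict _ fun y => by
    simp [LinearMap.mem_ker, ← LinearMap.comp_apply q β, hβ, ← LinearMap.comp_apply p α, hα]
  refine ⟨e ∘ₗ α + φ ∘ₗ r, LinearMap.ext fun k => ?_⟩
  have hαk : α k ∈ LinearMap.ker p := by
    simp [← LinearMap.comp_apply p α, hα]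
  have := LinearMap.congr_fun he ⟨α k, hαk⟩
  simp only [LinearMap.comp_apply, Submodule.subtype_apply, LinearMap.add_apply] at this ⊢
  rw [this, ← map_add]
  congr 1
  ext
  simp [r, LinearMap.restrict_apply]

theorem Submodule.HomExtends.ker_comp {q : P →ₗ[R] D} {ρ : D →ₗ[R] M}
    (hq : Function.Surjective q) (hqF : (LinearMap.ker q).HomExtends F)
    (hρF : (LinearMap.ker ρ).HomExtends F) : (LinearMap.ker (ρ ∘ₗ q)).HomExtends F := by
  intro φ
  have hle : LinearMap.ker q ≤ LinearMap.ker (ρ ∘ₗ q) := LinearMap.ker_le_ker_comp q ρ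
  obtain ⟨h₀, hh₀⟩ := hqF (φ ∘ₗ Submodule.inclusion hle)
  let q' : LinearMap.ker (ρ ∘ₗ q) →ₗ[R] LinearMap.ker ρ := q.restrict fun x hx => hx
  have hq' : Function.Surjective q' := fun k => by
    obtain ⟨x, hx⟩ := hq k
    exact ⟨⟨x, by simp [hx]⟩, Subtype.ext hx⟩
  obtain ⟨γ, hγ⟩ := LinearMap.exists_comp_eq_of_ker_le hq'
    (g := φ - h₀ ∘ₗ (LinearMap.ker (ρ ∘ₗ q)).subtype) fun x hx => by
      have : h₀ x = φ x := LinearMap.congr_fun hh₀ ⟨x, congrArg Subtype.val hx⟩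
      simp [this]
  obtain ⟨h₁, rfl⟩ := hρF γ
  refine ⟨h₀ + h₁ ∘ₗ q, LinearMap.ext fun x => ?_⟩
  have : h₁ (q x) = φ x - h₀ x := LinearMap.congr_fun hγ x
  simp [this]

theorem Submodule.HomExtends.ker_of_comp {q : P →ₗ[R] D} {ρ : D →ₗ[R] M}
    (hq : Function.Surjective q) (h : (LinearMap.ker (ρ ∘ₗ q)).HomExtends F) :
    (LinearMap.ker ρ).HomExtends F := by
  intro φ
  let q' : LinearMap.ker (ρ ∘ₗ q) →ₗ[R] LinearMap.ker ρ := q.restrict fun x hx => hx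
  obtain ⟨h₀, hh₀⟩ := h (φ ∘ₗ q')
  obtain ⟨h, rfl⟩ := LinearMap.exists_comp_eq_of_ker_le hq (g := h₀) fun x hx => by
    have hxρ := LinearMap.ker_le_ker_comp q ρ hx
    have : h₀ x = φ (q' ⟨x, hxρ⟩) := LinearMap.congr_fun hh₀ ⟨x, hxρ⟩
    simp [this, show q' ⟨x, hxρ⟩ = 0 from Subtype.ext hx]
  refine ⟨h, LinearMap.ext fun k => ?_⟩
  obtain ⟨x, hx⟩ := hq k
  have hxk : x ∈ LinearMap.ker (ρ ∘ₗ q) := by simp [hx]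
  have : h (q x) = φ (q' ⟨x, hxk⟩) := LinearMap.congr_fun hh₀ ⟨x, hxk⟩
  rwa [show q' ⟨x, hxk⟩ = k from Subtype.ext hx, hx] at this

end HomExtends

section ExtOne

open CategoryTheory

variable {R : Type u} [Ring R] {P D M F : Type u} [AddCommGroup P] [Module R P]
  [AddCommGroup D] [Module R D] [AddCommGroup M] [Module R M] [AddCommGroup F] [Module R F]

theorem extIsZero_one_iff_exact_precomp (Q : ProjectiveResolution (ModuleCat.of R M)) :
    ExtIsZero R 1 M F ↔
      Function.Exact (fun g : (Q.complex.X 0 : Type u) →ₗ[R] F => g ∘ₗ (Q.complex.d 1 0).hom)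
        (fun g : (Q.complex.X 1 : Type u) →ₗ[R] F => g ∘ₗ (Q.complex.d 2 1).hom) := by
  rw [ExtIsZero, ← ModuleCat.isZero_iff_subsingleton, (Q.isoExt 1 _).isZero_iff,
    ← HomologicalComplex.exactAt_iff_isZero_homology,
    HomologicalComplex.exactAt_iff' _ 0 1 2 (by simp) (by simp),
    ShortComplex.moduleCat_exact_iff]
  set Y := Q.complex.linearYonedaObj ℤ (ModuleCat.of R F)
  have hd : ∀ (i j : ℕ) (g : Q.complex.X i ⟶ ModuleCat.of R F),
      Y.d i j g = Q.complex.d j i ≫ g := fun i j g => by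
      rw [ChainComplex.linearYonedaObj_d]
      exact Linear.leftComp_apply ℤ _ _ g
  constructor
  · intro hex g
    refine ⟨fun hg => ?_, ?_⟩
    · obtain ⟨h, hh⟩ := hex (ModuleCat.ofHom g) <| by
        change Y.d 1 2 (ModuleCat.ofHom g) = 0
        rw [hd]
        exact ModuleCat.hom_ext hg
      change Q.complex.X 0 ⟶ ModuleCat.of R F at h
      change Y.d 0 1 h = ModuleCat.ofHom g at hh
      rw [hd] at hh
      exact ⟨h.hom, congrArg ModuleCat.Hom.hom hh⟩
    · rintro ⟨h, rfl⟩
      ext x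
      simp [← LinearMap.comp_apply, ← ModuleCat.hom_comp]
  · intro hex g hg
    change Q.complex.X 1 ⟶ ModuleCat.of R F at g
    change Y.d 1 2 g = 0 at hg
    rw [hd] at hg
    obtain ⟨h, hh⟩ := (hex g.hom).1 (congrArg ModuleCat.Hom.hom hg)
    refine ⟨ModuleCat.ofHom h, ?_⟩
    change Y.d 0 1 (ModuleCat.ofHom h) = g
    rw [hd]
    exact ModuleCat.hom_ext hh

theorem extIsZero_one_iff_homExtends_ker [Module.Projective R P] {p : P →ₗ[R] M}
    (hp : Function.Surjective p) : ExtIsZero R 1 M F ↔ (LinearMap.ker p).HomExtends F := by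
  let Q := ProjectiveResolution.of (ModuleCat.of R M)
  have : Module.Projective R (Q.complex.X 0) :=
    (IsProjective.iff_projective (Q.complex.X 0)).2 (Q.projective 0)
  have hπ : Function.Surjective (Q.π.f 0).hom := (ModuleCat.epi_iff_surjective _).1 inferInstance
  rw [extIsZero_one_iff_exact_precomp Q, exact_precomp_iff_homExtends_ker
    ((ShortComplex.ShortExact.moduleCat_exact_iff_function_exact _).1 (Q.exact_succ 0))
    ((ShortComplex.ShortExact.moduleCat_exact_iff_function_exact _).1 Q.exact₀)]
  exact ⟨fun h => h.ker_of_projective hπ hp, fun h => h.ker_of_projective hp hπ⟩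

theorem homExtends_ker_of_extIsZero_one {ρ : D →ₗ[R] M} (hρ : Function.Surjective ρ)
    (h : ExtIsZero R 1 M F) : (LinearMap.ker ρ).HomExtends F := by
  have hp := Finsupp.linearCombination_id_surjective R D
  exact .ker_of_comp hp
    ((extIsZero_one_iff_homExtends_ker (p := ρ ∘ₗ Finsupp.linearCombination R id)
      (hρ.comp hp)).1 h)

theorem extIsZero_one_of_homExtends_ker {ρ : D →ₗ[R] M} (hρ : Function.Surjective ρ)
    (hD : ExtIsZero R 1 D F) (h : (LinearMap.ker ρ).HomExtends F) : ExtIsZero R 1 M F := by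
  have hp := Finsupp.linearCombination_id_surjective R D
  exact (extIsZero_one_iff_homExtends_ker (p := ρ ∘ₗ Finsupp.linearCombination R id)
    (hρ.comp hp)).2 (((extIsZero_one_iff_homExtends_ker hp).1 hD).ker_comp hp h)

theorem IsDingProjective.extIsZero_one (hD : IsDingProjective R D) (hF : IsFlatModule R F) :
    ExtIsZero R 1 D F := by
  obtain ⟨P, d, hP, hd, hdF, ⟨e⟩⟩ := hD
  -- indices stay in the form `-1 + 1 + ⋯` so that they match the types of `d`, `hd`, `hdF`
  let q : P (-1 + 1 + 1) →ₗ[R] D :=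
    e.symm.toLinearMap ∘ₗ (d (-1 + 1)).codRestrict _ fun x =>
      LinearMap.mem_ker.2 ((hd (-1)).apply_apply_eq_zero x)
  have hq : Function.Surjective q := e.symm.surjective.comp fun k =>
    let ⟨x, hx⟩ := (hd (-1) k).1 k.2
    ⟨x, Subtype.ext hx⟩
  have hker : LinearMap.ker q = LinearMap.ker (d (-1 + 1)) := by
    rw [LinearEquiv.ker_comp, LinearMap.ker_codRestrict]
  have := hP (-1 + 1 + 1)
  rw [extIsZero_one_iff_homExtends_ker hq, hker,
    ← exact_precomp_iff_homExtends_ker (hd (-1 + 1 + 1)) (hd (-1 + 1))]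
  exact hdF F hF (-1 + 1 + 1)

end ExtOne

/-- `M` is strongly two-degree Ding projective iff there is a short exact
sequence `0 → M → D → M → 0` with `D` Ding projective such that `Ext¹_R(M, F) = 0` for
every flat module `F`. -/
theorem strongly_twoDegree_ding_projective_iff_ext_flat (R : Type u) [Ring R]
    (M : Type u) [AddCommGroup M] [Module R M] :
    IsStronglyTwoDegreeDingProjective R M ↔
      ∃ (D : ModuleCat.{u} R) (ι : M →ₗ[R] D) (π : (D : Type u) →ₗ[R] M),
        Function.Injective ι ∧ Function.Surjective π ∧ Function.Exact ι π ∧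
        IsDingProjective R D ∧
        (∀ (F : Type u) [AddCommGroup F] [Module R F], IsFlatModule R F →
          ExtIsZero R 1 M F) := by
  constructor
  · rintro ⟨D, f, hD, hf, hfF, ⟨e⟩⟩
    let π : D →ₗ[R] M :=
      e.symm.toLinearMap ∘ₗ f.codRestrict _ fun x =>
        LinearMap.mem_ker.2 (hf.apply_apply_eq_zero x)
    have hπ : Function.Surjective π := e.symm.surjective.comp fun k =>
      let ⟨x, hx⟩ := (hf k).1 k.2
      ⟨x, Subtype.ext hx⟩
    have hker : LinearMap.ker π = LinearMap.ker f := by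
      rw [LinearEquiv.ker_comp, LinearMap.ker_codRestrict]
    refine ⟨D, (LinearMap.ker f).subtype ∘ₗ e.toLinearMap, π,
      Subtype.val_injective.comp e.injective, hπ, ?_, hD, fun F _ _ hF => ?_⟩
    · rw [LinearEquiv.precomp_exact_iff_exact, LinearEquiv.postcomp_exact_iff_exact,
        ← (LinearMap.ker f).injective_subtype.comp_exact_iff_exact]
      exact LinearMap.exact_subtype_ker_map f
    · refine extIsZero_one_of_homExtends_ker hπ (hD.extIsZero_one hF) ?_
      rw [hker, ← exact_precomp_iff_homExtends_ker hf hf]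
      exact hfF F hF
  · rintro ⟨D, ι, π, hι, hπ, hιπ, hD, hExt⟩
    have hf := hιπ.exact_comp_self hι hπ
    have hker : LinearMap.ker (ι ∘ₗ π) = LinearMap.ker π :=
      LinearMap.ker_comp_of_ker_eq_bot π (LinearMap.ker_eq_bot.2 hι)
    refine ⟨D, ι ∘ₗ π, hD, hf, fun F _ _ hF => ?_, ⟨(LinearEquiv.ofInjective ι hι).trans
      (LinearEquiv.ofEq _ _ (by rw [hker, hιπ.linearMap_ker_eq]))⟩⟩
    rw [exact_precomp_iff_homExtends_ker hf hf, hker]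
    exact homExtends_ker_of_extIsZero_one hπ (hExt F hF)
end
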